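/- Assume that every element of G whose order is divisible by p is a p-element (i.e., every p-singular element of G is a p-element), and let F be a field of characteristic p. Then: (a) every family (φ_P), indexed by the p-subgroups P of G, of group homomorphisms φ_P : N_G(P) → F^× with P ≤ ker(φ_P) and with φ_{gPg^{-1}}(gxg^{-1}) = φ_P(x) for all g ∈ G and x ∈ N_G(P), automatically satisfies the coherence condition φ_P(x) = φ_{P⟨x_p⟩}(x) for all x ∈ N_G(P), and hence is a coherent G-stable tuple of linear characters with values in F; (b) for any set R of representatives of the G-conjugacy classes of p-subgroups of G, the map sending such a family to the tuple of its components at the members of R is a group isomorphism from the group of coherent G-stable tuples of linear characters with values in F onto the direct product over P ∈ R of the groups of homomorphisms N_G(P) → F^× trivial on P. -/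

import Mathlib

/-!  Common definitions: representations of finite groups over a commutative ring,
direct summands, permutation modules, vertices, Brauer-type trivial parts, characters,
p-parts of group elements, coherent tuples.  -/

open scoped TensorProduct

universe u v w

section Defs

variable {k : Type u} [CommSemiring k]

/-- `ρ` is isomorphic to a direct summand of `σ`, equivariantly. -/
def IsSummand {G : Type*} [Monoid G] {V : Type*} [AddCommMonoid V] [Module k V]
    {W : Type*} [AddCommMonoid W] [Module k W]
    (ρ : Representation k G V) (σ : Representation k G W) : Prop :=
  ∃ (i : V →ₗ[k] W) (π : W →ₗ[k] V),
    (∀ g v, i (ρ g v) = σ g (i v)) ∧ (∀ g w, π (σ g w) = ρ g (π w)) ∧ ∀ v, π (i v) = v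

/-- equivariant isomorphism of representations -/
def RepEquiv {G : Type*} [Monoid G] {V : Type*} [AddCommMonoid V] [Module k V]
    {W : Type*} [AddCommMonoid W] [Module k W]
    (ρ : Representation k G V) (σ : Representation k G W) : Prop :=
  ∃ e : V ≃ₗ[k] W, ∀ g v, e (ρ g v) = σ g (e v)

/-- the direct sum of two representations -/
def prodRep {G : Type*} [Monoid G] {V : Type*} [AddCommMonoid V] [Module k V]
    {W : Type*} [AddCommMonoid W] [Module k W]
    (ρ : Representation k G V) (σ : Representation k G W) :
    Representation k G (V × W) where
  toFun g := (ρ g).prodMap (σ g)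
  map_one' := by apply LinearMap.ext; intro v; simp
  map_mul' g h := by apply LinearMap.ext; intro v; simp

/-- the permutation representation attached to an action of `G` on `X` by permutations -/
def permRep {G : Type*} [Group G] (X : Type*) (a : G →* Equiv.Perm X) :
    Representation k G (X → k) where
  toFun g := LinearMap.funLeft k k (a g⁻¹)
  map_one' := by apply LinearMap.ext; intro f; simp [LinearMap.funLeft]
  map_mul' g h := by
    apply LinearMap.ext; intro f; funext x
    simp [LinearMap.funLeft, mul_inv_rev]

/-- a p-permutation module over `k`: a module isomorphic to a direct summand of a
permutation module `k[X]` for a finite `G`-set `X` -/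
def IsPermutationSummand {G : Type*} [Group G] {V : Type*} [AddCommMonoid V] [Module k V]
    (ρ : Representation k G V) : Prop :=
  ∃ (X : Type u) (a : G →* Equiv.Perm X), Finite X ∧ IsSummand ρ (permRep X a)

/-- an indecomposable representation: nonzero, and every equivariant idempotent
endomorphism is `0` or the identity -/
def IsIndecomposableRep {G : Type*} [Monoid G] {V : Type*} [AddCommMonoid V] [Module k V]
    (ρ : Representation k G V) : Prop :=
  (∃ v : V, v ≠ 0) ∧ ∀ f : V →ₗ[k] V,
    (∀ g v, f (ρ g v) = ρ g (f v)) → (∀ v, f (f v) = f v) →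
      (∀ v, f v = 0) ∨ (∀ v, f v = v)

/-- the carrier of the induced module `Ind_H^G (Res_H^G ρ)`:
functions `f : G → V` with `f (h * g) = ρ h (f g)` for `h ∈ H` -/
def indResCarrier {G : Type*} [Group G] {V : Type*} [AddCommMonoid V] [Module k V]
    (ρ : Representation k G V) (H : Subgroup G) : Submodule k (G → V) where
  carrier := {f | ∀ (h : H) (g : G), f (↑h * g) = ρ ↑h (f g)}
  add_mem' := by
    intro f g hf hg h x
    simp only [Pi.add_apply, hf h x, hg h x, map_add]
  zero_mem' := by intro h x; simp
  smul_mem' := by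
    intro c f hf h x
    simp only [Pi.smul_apply, hf h x, map_smul]

/-- the representation `Ind_H^G (Res_H^G ρ)`, with `G` acting by right translation -/
def indResRep {G : Type*} [Group G] {V : Type*} [AddCommMonoid V] [Module k V]
    (ρ : Representation k G V) (H : Subgroup G) :
    Representation k G (indResCarrier ρ H) where
  toFun g :=
    { toFun := fun f => ⟨fun x => (f : G → V) (x * g), fun h x => by
        simpa [mul_assoc] using f.2 h (x * g)⟩
      map_add' := fun f₁ f₂ => rfl
      map_smul' := fun c f => rfl }
  map_one' := by
    apply LinearMap.ext; intro f; apply Subtype.ext; funext x; simp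
  map_mul' g₁ g₂ := by
    apply LinearMap.ext; intro f; apply Subtype.ext; funext x
    show (f : G → V) (x * (g₁ * g₂)) = (f : G → V) (x * g₁ * g₂)
    rw [mul_assoc]

/-- `ρ` is relatively `H`-projective in the sense that it is a direct summand of
`Ind_H^G (Res_H^G ρ)` -/
def IsRelativelyProjective {G : Type*} [Group G] {V : Type*} [AddCommMonoid V] [Module k V]
    (ρ : Representation k G V) (H : Subgroup G) : Prop :=
  IsSummand ρ (indResRep ρ H)

/-- `Q` is a vertex of `ρ`: minimal among the subgroups `R` with
`ρ` a direct summand of `Ind_R^G (Res_R^G ρ)` -/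
def IsVertex {G : Type*} [Group G] {V : Type*} [AddCommMonoid V] [Module k V]
    (ρ : Representation k G V) (Q : Subgroup G) : Prop :=
  IsRelativelyProjective ρ Q ∧ ∀ R : Subgroup G, R < Q → ¬ IsRelativelyProjective ρ R

end Defs

/-- a bundled representation of `G` over `k` -/
structure RepOn (k : Type u) (G : Type v) [CommSemiring k] [Monoid G] :
    Type (max (u + 1) v) where
  carrier : Type u
  [isAddCommGroup : AddCommGroup carrier]
  [isModule : Module k carrier]
  ρ : Representation k G carrier

attribute [instance] RepOn.isAddCommGroup RepOn.isModule

section Defs2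

variable {k : Type u} [CommSemiring k]

/-- the subgroup `P` acts trivially on the representation `σ` -/
def TrivialOn {Γ : Type*} [Group Γ] {V : Type*} [AddCommMonoid V] [Module k V]
    (σ : Representation k Γ V) (P : Subgroup Γ) : Prop :=
  ∀ x ∈ P, ∀ v : V, σ x v = v

/-- `A` is a `P`-trivial part of `σ`: `σ ≅ A ⊕ B` where `P` acts trivially on `A` and
no nonzero direct summand of `B` has trivial `P`-action -/
def IsTrivialPartFor {Γ : Type v} [Group Γ] {V : Type*} [AddCommMonoid V] [Module k V]
    (σ : Representation k Γ V) (P : Subgroup Γ) (A : RepOn k Γ) : Prop :=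
  TrivialOn A.ρ P ∧
  ∃ B : RepOn k Γ, RepEquiv σ (prodRep A.ρ B.ρ) ∧
    ∀ U : RepOn k Γ, IsSummand U.ρ B.ρ → TrivialOn U.ρ P → ∀ u : U.carrier, u = 0

/-- `A` is a `P`-trivial part `M_P` of `ρ`: a direct summand of
`Res^G_{N_G(P)} ρ` with trivial `P`-action whose complement has no nonzero direct
summand with trivial `P`-action -/
def IsPTrivialPart {G : Type v} [Group G] {V : Type*} [AddCommMonoid V] [Module k V]
    (ρ : Representation k G V) (P : Subgroup G) (A : RepOn k ↥(Subgroup.normalizer (P : Set G))) : Prop :=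
  IsTrivialPartFor (ρ.comp (Subgroup.normalizer (P : Set G)).subtype) (P.subgroupOf (Subgroup.normalizer (P : Set G))) A

end Defs2

/-- the character value at `x` of the `K ⊗ₖ -` base change of the representation `σ` -/
noncomputable def charAt {k : Type u} [CommRing k] (K : Type v) [CommRing K] [Algebra k K]
    {Γ : Type*} [Monoid Γ] {V : Type*} [AddCommGroup V] [Module k V]
    (σ : Representation k Γ V) (x : Γ) : K :=
  LinearMap.trace K (TensorProduct k K V) (LinearMap.baseChange K (σ x))

/-- the `p`-part of a group element (of finite order) -/
noncomputable def pPart (p : ℕ) {G : Type*} [Group G] (x : G) : G :=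
  x ^ ((orderOf x / p ^ (orderOf x).factorization p) *
    (((orderOf x / p ^ (orderOf x).factorization p : ℕ) :
        ZMod (p ^ (orderOf x).factorization p))⁻¹).val)

/-- the `p'`-part of a natural number -/
def pPrimePart (p n : ℕ) : ℕ := n / p ^ n.factorization p

/-- the conjugate subgroup `g P g⁻¹` -/
def conjSubgroup {G : Type*} [Group G] (g : G) (P : Subgroup G) : Subgroup G :=
  Subgroup.map (MulAut.conj g).toMonoidHom P

/-- `(ρM, ρN)` is an orthogonal unit pair:
`(M ⊗ M°) ⊕ (N ⊗ N°) ≅ k ⊕ (M ⊗ N°) ⊕ (N ⊗ M°)` equivariantly, i.e.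
`[M] - [N]` is an orthogonal unit of the trivial source ring -/
def IsOrthogonalUnitPair {k : Type u} [CommRing k] {G : Type v} [Group G]
    {V : Type*} [AddCommGroup V] [Module k V] {W : Type*} [AddCommGroup W] [Module k W]
    (ρM : Representation k G V) (ρN : Representation k G W) : Prop :=
  RepEquiv (prodRep (ρM.tprod ρM.dual) (ρN.tprod ρN.dual))
    (prodRep (Representation.trivial k (G := G) (V := k)) (prodRep (ρM.tprod ρN.dual) (ρN.tprod ρM.dual)))

/-- the type of `p`-subgroups of `G` -/
def pSubgroup (p : ℕ) (G : Type*) [Group G] : Type _ := {P : Subgroup G // IsPGroup p ↥P}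

/-- a coherent `G`-stable tuple of linear characters:
`P ≤ ker φ_P`, `G`-stability, and the coherence condition
`φ_P(x) = φ_{P⟨x_p⟩}(x)` for `x ∈ N_G(P)` -/
def CoherentPred (p : ℕ) {G : Type*} [Group G] {L : Type*} [CommMonoid L]
    (φ : ∀ P : pSubgroup p G, ↥((Subgroup.normalizer (P.1 : Set G))) →* Lˣ) : Prop :=
  (∀ (P : pSubgroup p G) (x : G) (hx : x ∈ P.1),
      φ P ⟨x, Subgroup.le_normalizer hx⟩ = 1) ∧
  (∀ (P Q : pSubgroup p G) (g x : G) (hx : x ∈ (Subgroup.normalizer (P.1 : Set G))),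
      Q.1 = conjSubgroup g P.1 → ∀ (hx' : g * x * g⁻¹ ∈ (Subgroup.normalizer (Q.1 : Set G))),
      φ Q ⟨g * x * g⁻¹, hx'⟩ = φ P ⟨x, hx⟩) ∧
  (∀ (P Q : pSubgroup p G) (x : G) (hx : x ∈ (Subgroup.normalizer (P.1 : Set G))),
      Q.1 = P.1 ⊔ Subgroup.zpowers (pPart p x) → ∀ (hx' : x ∈ (Subgroup.normalizer (Q.1 : Set G))),
      φ P ⟨x, hx⟩ = φ Q ⟨x, hx'⟩)

/-- the group of coherent `G`-stable tuples of linear characters with values in `L` -/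
def coherentTuples (p : ℕ) (G : Type w) [Group G] (L : Type v) [CommMonoid L] :
    Subgroup (∀ P : pSubgroup p G, ↥((Subgroup.normalizer (P.1 : Set G))) →* Lˣ) where
  carrier := {φ | CoherentPred p φ}
  one_mem' := ⟨fun _ _ _ => rfl, fun _ _ _ _ _ _ _ => rfl, fun _ _ _ _ _ _ => rfl⟩
  mul_mem' := by
    intro a b ha hb
    refine ⟨fun P x hx => ?_, fun P Q g x hx hQ hx' => ?_, fun P Q x hx hQ hx' => ?_⟩
    · show a P _ * b P _ = 1
      rw [ha.1 P x hx, hb.1 P x hx, mul_one]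
    · show a Q _ * b Q _ = a P _ * b P _
      rw [ha.2.1 P Q g x hx hQ hx', hb.2.1 P Q g x hx hQ hx']
    · show a P _ * b P _ = a Q _ * b Q _
      rw [ha.2.2 P Q x hx hQ hx', hb.2.2 P Q x hx hQ hx']
  inv_mem' := by
    intro a ha
    refine ⟨fun P x hx => ?_, fun P Q g x hx hQ hx' => ?_, fun P Q x hx hQ hx' => ?_⟩
    · show (a P _)⁻¹ = 1
      rw [ha.1 P x hx, inv_one]
    · show (a Q _)⁻¹ = (a P _)⁻¹
      rw [ha.2.1 P Q g x hx hQ hx']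
    · show (a P _)⁻¹ = (a Q _)⁻¹
      rw [ha.2.2 P Q x hx hQ hx']

/-- the group of homomorphisms `N_G(P) → Lˣ` that are trivial on `P` -/
def trivOnHoms {G : Type w} [Group G] (P : Subgroup G) (L : Type v) [CommMonoid L] :
    Subgroup (↥(Subgroup.normalizer (P : Set G)) →* Lˣ) where
  carrier := {f | ∀ (x : G) (hx : x ∈ P), f ⟨x, Subgroup.le_normalizer hx⟩ = 1}
  one_mem' := fun _ _ => rfl
  mul_mem' := by
    intro a b ha hb x hx
    show a _ * b _ = 1
    rw [ha x hx, hb x hx, mul_one]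
  inv_mem' := by
    intro a ha x hx
    show (a _)⁻¹ = 1
    rw [ha x hx, inv_one]

/-! Every linear character `N_G(P) → Fˣ` kills the `p`-elements of `N_G(P)`, since `1` is the
only `p`-power root of unity in characteristic `p`. Under the hypothesis on `G`, an element `x`
either is a `p`-element, and then both sides of the coherence condition are `1`, or has
`x_p = 1`, and then `P⟨x_p⟩ = P`. So coherent tuples are just `G`-stable ones, and a `G`-stable
tuple is freely determined by its components at representatives of the conjugacy classes:
conversely, a component `ψ_Q` transports to every conjugate `gQg⁻¹` as `x ↦ ψ_Q(g⁻¹xg)`,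
independently of `g` because `ψ_Q` is constant on `N_G(Q)`-conjugacy classes. -/

section ConjSubgroup

open Subgroup

variable {G : Type*} [Group G]

lemma mem_conjSubgroup_iff {g x : G} {S : Subgroup G} :
    x ∈ conjSubgroup g S ↔ g⁻¹ * x * g ∈ S := by
  rw [conjSubgroup, Subgroup.mem_map_equiv, MulAut.conj_symm_apply]

lemma conjSubgroup_one (S : Subgroup G) : conjSubgroup 1 S = S := by
  ext x
  simp [mem_conjSubgroup_iff]

lemma conjSubgroup_mul (a b : G) (S : Subgroup G) :
    conjSubgroup (a * b) S = conjSubgroup a (conjSubgroup b S) := by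
  ext x
  simp only [mem_conjSubgroup_iff, mul_inv_rev, mul_assoc]

lemma normalizer_conjSubgroup (g : G) (S : Subgroup G) :
    normalizer (conjSubgroup g S : Set G) = conjSubgroup g (normalizer (S : Set G)) :=
  (Subgroup.map_equiv_normalizer_eq S (MulAut.conj g)).symm

lemma conj_mem_normalizer_of_conjSubgroup_eq {g x : G} {S P : Subgroup G}
    (h : conjSubgroup g S = P) (hx : x ∈ normalizer (P : Set G)) :
    g⁻¹ * x * g ∈ normalizer (S : Set G) := by
  rwa [← h, normalizer_conjSubgroup, mem_conjSubgroup_iff] at hx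

lemma mem_normalizer_of_conjSubgroup_eq_self {g : G} {S : Subgroup G}
    (h : conjSubgroup g S = S) : g ∈ normalizer (S : Set G) := by
  refine Subgroup.mem_normalizer_iff.mpr fun x => ?_
  conv_rhs => rw [← h, mem_conjSubgroup_iff]
  group

def conjNormHom (g : G) (S P : Subgroup G) (h : conjSubgroup g S = P) :
    normalizer (P : Set G) →* normalizer (S : Set G) where
  toFun x := ⟨g⁻¹ * x * g, conj_mem_normalizer_of_conjSubgroup_eq h x.2⟩
  map_one' := Subtype.ext (by simp)
  map_mul' x y := Subtype.ext (by simp only [Subgroup.coe_mul]; group)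

@[simp]
lemma coe_conjNormHom_apply (g : G) (S P : Subgroup G) (h : conjSubgroup g S = P)
    (x : normalizer (P : Set G)) : (conjNormHom g S P h x : G) = g⁻¹ * x * g :=
  rfl

lemma conjNormHom_one (S : Subgroup G) :
    conjNormHom 1 S S (conjSubgroup_one S) = MonoidHom.id _ := by
  ext x
  simp

lemma conjNormHom_comp_conjNormHom {a b : G} {S P Q : Subgroup G}
    (ha : conjSubgroup a S = P) (hb : conjSubgroup b P = Q) :
    (conjNormHom a S P ha).comp (conjNormHom b P Q hb) =
      conjNormHom (b * a) S Q (by rw [conjSubgroup_mul, ha, hb]) := by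
  ext x
  simp [mul_assoc]

lemma comp_conjNormHom_congr {M : Type*} [CommGroup M] {S P : Subgroup G}
    (f : normalizer (S : Set G) →* M) {a b : G} (ha : conjSubgroup a S = P)
    (hb : conjSubgroup b S = P) :
    f.comp (conjNormHom a S P ha) = f.comp (conjNormHom b S P hb) := by
  have hn : a⁻¹ * b ∈ normalizer (S : Set G) := by
    apply mem_normalizer_of_conjSubgroup_eq_self
    rw [conjSubgroup_mul, hb, ← ha, ← conjSubgroup_mul, inv_mul_cancel, conjSubgroup_one]
  ext x
  have hconj : conjNormHom a S P ha x = ⟨a⁻¹ * b, hn⟩ * conjNormHom b S P hb x *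
      (⟨a⁻¹ * b, hn⟩ : normalizer (S : Set G))⁻¹ :=
    Subtype.ext (by simp only [coe_conjNormHom_apply, Subgroup.coe_mul, Subgroup.coe_inv]; group)
  simp only [MonoidHom.comp_apply, hconj, map_mul, map_inv, mul_inv_cancel_comm]

end ConjSubgroup

lemma pPart_eq_one_of_not_dvd {G : Type*} [Group G] {p : ℕ} {x : G} (h : ¬ p ∣ orderOf x) :
    pPart p x = 1 := by
  have hval (z : ZMod 1) : z.val = 0 := Nat.lt_one_iff.mp (ZMod.val_lt z)
  rw [pPart, Nat.factorization_eq_zero_of_not_dvd h]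
  -- `ZMod (p ^ 0)` is `ZMod 1` only up to unfolding
  erw [hval, mul_zero, pow_zero]

lemma MonoidHom.map_eq_one_of_orderOf_eq_prime_pow {p : ℕ} [Fact p.Prime] {H : Type*} [Monoid H]
    {F : Type*} [Field F] [CharP F p] (f : H →* Fˣ) {h : H} {n : ℕ} (hh : orderOf h = p ^ n) :
    f h = 1 := by
  have hpow : (f h : F) ^ p ^ n = 1 ^ p ^ n := by
    rw [one_pow, ← Units.val_pow_eq_pow_val, ← map_pow, ← hh, pow_orderOf_eq_one, map_one,
      Units.val_one]
  exact Units.val_eq_one.mp (iterateFrobenius_inj F p n hpow)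

section Tuples

open Subgroup

variable {p : ℕ} {G : Type*} [Group G] {L : Type*} [CommMonoid L]

def IsGStable (φ : ∀ P : pSubgroup p G, normalizer (P.1 : Set G) →* Lˣ) : Prop :=
  ∀ (P Q : pSubgroup p G) (g x : G) (hx : x ∈ normalizer (P.1 : Set G)),
    Q.1 = conjSubgroup g P.1 → ∀ (hx' : g * x * g⁻¹ ∈ normalizer (Q.1 : Set G)),
    φ Q ⟨g * x * g⁻¹, hx'⟩ = φ P ⟨x, hx⟩

lemma isGStable_iff {φ : ∀ P : pSubgroup p G, normalizer (P.1 : Set G) →* Lˣ} :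
    IsGStable φ ↔ ∀ (S P : pSubgroup p G) (g : G) (h : conjSubgroup g S.1 = P.1),
      φ P = (φ S).comp (conjNormHom g S.1 P.1 h) := by
  constructor
  · intro hφ S P g h
    ext1 ⟨x, hx⟩
    have hgx : g * (g⁻¹ * x * g) * g⁻¹ = x := by group
    have := hφ S P g _ (conj_mem_normalizer_of_conjSubgroup_eq h hx) h.symm (by rwa [hgx])
    simp only [hgx] at this
    exact this
  · intro hφ P Q g x hx hQ hx'
    rw [hφ P Q g hQ.symm, MonoidHom.comp_apply]
    congr 1
    ext1
    simp only [coe_conjNormHom_apply]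
    group

lemma coherentPred_of_isGStable [Fact p.Prime]
    (hsing : ∀ x : G, p ∣ orderOf x → ∃ n, orderOf x = p ^ n)
    {F : Type*} [Field F] [CharP F p]
    {φ : ∀ P : pSubgroup p G, normalizer (P.1 : Set G) →* Fˣ}
    (hker : ∀ (P : pSubgroup p G) (x : G) (hx : x ∈ P.1), φ P ⟨x, le_normalizer hx⟩ = 1)
    (hφ : IsGStable φ) : CoherentPred p φ := by
  refine ⟨hker, hφ, fun P Q x hx hQ hx' => ?_⟩
  by_cases hdvd : p ∣ orderOf x
  · obtain ⟨n, hn⟩ := hsing x hdvd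
    rw [(φ P).map_eq_one_of_orderOf_eq_prime_pow (by rwa [Subgroup.orderOf_mk]),
      (φ Q).map_eq_one_of_orderOf_eq_prime_pow (by rwa [Subgroup.orderOf_mk])]
  · obtain rfl : P = Q := Subtype.ext <| by
      rw [hQ, pPart_eq_one_of_not_dvd hdvd, Subgroup.zpowers_one_eq_bot, sup_bot_eq]
    rfl

def restrictCoherentTuples (R : Set (pSubgroup p G)) :
    coherentTuples p G L →* ∀ Q : R, trivOnHoms (Q : pSubgroup p G).1 L where
  toFun φ Q := ⟨φ.1 Q, φ.2.1 Q⟩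
  map_one' := rfl
  map_mul' _ _ := rfl

lemma restrictCoherentTuples_injective {R : Set (pSubgroup p G)}
    (hR : ∀ P : pSubgroup p G, ∃ Q ∈ R, ∃ g : G, conjSubgroup g Q.1 = P.1) :
    Function.Injective (restrictCoherentTuples (L := L) R) := by
  intro φ ψ hφψ
  ext1
  funext P
  obtain ⟨Q, hQ, g, hg⟩ := hR P
  have hQ : φ.1 Q = ψ.1 Q := congrArg Subtype.val (congrFun hφψ ⟨Q, hQ⟩)
  have hstable (χ : coherentTuples p G L) := isGStable_iff.mp (χ.2 : CoherentPred p χ.1).2.1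
  rw [hstable φ Q P g hg, hstable ψ Q P g hg, hQ]

lemma exists_isGStable_extension {R : Set (pSubgroup p G)}
    (hR : ∀ P : pSubgroup p G, ∃! Q, Q ∈ R ∧ ∃ g : G, conjSubgroup g Q.1 = P.1)
    (ψ : ∀ Q : R, trivOnHoms (Q : pSubgroup p G).1 L) :
    ∃ φ : ∀ P : pSubgroup p G, normalizer (P.1 : Set G) →* Lˣ,
      (∀ (P : pSubgroup p G) (x : G) (hx : x ∈ P.1), φ P ⟨x, le_normalizer hx⟩ = 1) ∧
      IsGStable φ ∧ ∀ Q : R, φ Q = (ψ Q).1 := by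
  unfold ExistsUnique at hR
  choose rep hrep hunique using hR
  choose hmem g hg using hrep
  let φ P := (ψ ⟨rep P, hmem P⟩).1.comp (conjNormHom (g P) (rep P).1 P.1 (hg P))
  have hφ (P S : pSubgroup p G) (hS : S ∈ R) (a : G) (ha : conjSubgroup a S.1 = P.1) :
      φ P = (ψ ⟨S, hS⟩).1.comp (conjNormHom a S.1 P.1 ha) := by
    obtain rfl := hunique P S ⟨hS, a, ha⟩
    exact comp_conjNormHom_congr _ _ _
  refine ⟨φ, fun P x hx => (ψ ⟨rep P, hmem P⟩).2 _ ?_, isGStable_iff.mpr fun S P a h => ?_,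
    fun Q => ?_⟩
  · rw [← mem_conjSubgroup_iff, hg P]
    exact hx
  · rw [MonoidHom.comp_assoc, conjNormHom_comp_conjNormHom, ← hφ]
  · rw [hφ Q Q Q.2 1 (conjSubgroup_one _), conjNormHom_one, MonoidHom.comp_id]

end Tuples

theorem statement14_general (p : ℕ) [Fact p.Prime]
    (G : Type w) [Group G]
    (F : Type v) [Field F] [CharP F p]
    (hsing : ∀ x : G, p ∣ orderOf x → ∃ n : ℕ, orderOf x = p ^ n) :
    (∀ (φ : ∀ P : pSubgroup p G, ↥((Subgroup.normalizer (P.1 : Set G))) →* Fˣ),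
      (∀ (P : pSubgroup p G) (x : G) (hx : x ∈ P.1),
        φ P ⟨x, Subgroup.le_normalizer hx⟩ = 1) →
      (∀ (P Q : pSubgroup p G) (g x : G) (hx : x ∈ (Subgroup.normalizer (P.1 : Set G))),
        Q.1 = conjSubgroup g P.1 → ∀ (hx' : g * x * g⁻¹ ∈ (Subgroup.normalizer (Q.1 : Set G))),
        φ Q ⟨g * x * g⁻¹, hx'⟩ = φ P ⟨x, hx⟩) →
      CoherentPred p φ) ∧
    (∀ R : Set (pSubgroup p G),
      (∀ P : pSubgroup p G, ∃! Q : pSubgroup p G,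
        Q ∈ R ∧ ∃ g : G, conjSubgroup g Q.1 = P.1) →
      ∃ e : ↥(coherentTuples p G F) ≃*
          (∀ Q : R, ↥(trivOnHoms (Q : pSubgroup p G).1 F)),
        ∀ (φ : ↥(coherentTuples p G F)) (Q : R),
          ((e φ) Q).1 = φ.1 (Q : pSubgroup p G)) := by
  refine ⟨fun φ hker hφ => coherentPred_of_isGStable hsing hker hφ, fun R hR => ?_⟩
  have hsurj : Function.Surjective (restrictCoherentTuples (L := F) R) := fun ψ => by
    obtain ⟨φ, hker, hφ, hext⟩ := exists_isGStable_extension hR ψ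
    exact ⟨⟨φ, coherentPred_of_isGStable hsing hker hφ⟩,
      funext fun Q => Subtype.ext (hext Q)⟩
  have hinj := restrictCoherentTuples_injective (L := F) fun P => (hR P).exists
  exact ⟨MulEquiv.ofBijective _ ⟨hinj, hsurj⟩, fun _ _ => rfl⟩

theorem statement14 (p : ℕ) [Fact p.Prime]
    (G : Type w) [Group G] [Finite G]
    (F : Type v) [Field F] [CharP F p]
    (hsing : ∀ x : G, p ∣ orderOf x → ∃ n : ℕ, orderOf x = p ^ n) :
    (∀ (φ : ∀ P : pSubgroup p G, ↥((Subgroup.normalizer (P.1 : Set G))) →* Fˣ),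
      (∀ (P : pSubgroup p G) (x : G) (hx : x ∈ P.1),
        φ P ⟨x, Subgroup.le_normalizer hx⟩ = 1) →
      (∀ (P Q : pSubgroup p G) (g x : G) (hx : x ∈ (Subgroup.normalizer (P.1 : Set G))),
        Q.1 = conjSubgroup g P.1 → ∀ (hx' : g * x * g⁻¹ ∈ (Subgroup.normalizer (Q.1 : Set G))),
        φ Q ⟨g * x * g⁻¹, hx'⟩ = φ P ⟨x, hx⟩) →
      CoherentPred p φ) ∧
    (∀ R : Set (pSubgroup p G),
      (∀ P : pSubgroup p G, ∃! Q : pSubgroup p G,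
        Q ∈ R ∧ ∃ g : G, conjSubgroup g Q.1 = P.1) →
      ∃ e : ↥(coherentTuples p G F) ≃*
          (∀ Q : R, ↥(trivOnHoms (Q : pSubgroup p G).1 F)),
        ∀ (φ : ↥(coherentTuples p G F)) (Q : R),
          ((e φ) Q).1 = φ.1 (Q : pSubgroup p G)) :=
  statement14_general p G F hsing
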